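/- The series Ψ(a,z) = ₁φ₁(a; 0; q², z) satisfies the contiguity relation Ψ(a,z) − aΨ(a,q²z) = (1−a)Ψ(q²a,z). -/

import Mathlib

open scoped BigOperators

/-- The q-Pochhammer symbol (a;q)_n. -/
noncomputable def qPoch (a q : ℂ) (n : ℕ) : ℂ :=
  ∏ k ∈ Finset.range n, (1 - a * q ^ k)

/-- Ψ(a,z) = ₁φ₁(a; 0; q², z). -/
noncomputable def psi11 (q a z : ℂ) : ℂ :=
  ∑' n : ℕ, qPoch a (q ^ 2) n / qPoch (q ^ 2) (q ^ 2) n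
    * (-1) ^ n * q ^ (n * (n - 1)) * z ^ n

/-!
The identity holds coefficientwise, because
`(a;Q)_n (1 - a Qⁿ) = (a;Q)_{n+1} = (1 - a) (Qa;Q)_n` with `Q = q²`.
For `‖q‖ < 1` all three series converge by the ratio test (the ratio of consecutive terms
is `O(Qⁿ)`), so the coefficientwise identity passes to the sums.
-/

open Filter Topology

theorem summable_of_succ_eq_mul_of_tendsto_zero {R : Type*} [NormedRing R] [CompleteSpace R]
    {f w : ℕ → R} (hf : ∀ n, f (n + 1) = f n * w n) (hw : Tendsto w atTop (𝓝 0)) :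
    Summable f := by
  have hsmall : ∀ᶠ n in atTop, ‖w n‖ ≤ 1 / 2 :=
    (tendsto_zero_iff_norm_tendsto_zero.mp hw).eventually_le_const (by norm_num)
  refine summable_of_ratio_norm_eventually_le (r := 1 / 2) (by norm_num) ?_
  filter_upwards [hsmall] with n hn
  calc ‖f (n + 1)‖ = ‖f n * w n‖ := by rw [hf]
    _ ≤ ‖f n‖ * ‖w n‖ := norm_mul_le _ _
    _ ≤ ‖f n‖ * (1 / 2) := by gcongr
    _ = 1 / 2 * ‖f n‖ := mul_comm _ _

theorem qPoch_succ (a Q : ℂ) (n : ℕ) : qPoch a Q (n + 1) = qPoch a Q n * (1 - a * Q ^ n) :=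
  Finset.prod_range_succ _ _

theorem qPoch_succ' (a Q : ℂ) (n : ℕ) : qPoch a Q (n + 1) = (1 - a) * qPoch (Q * a) Q n := by
  rw [qPoch, Finset.prod_range_succ', qPoch, mul_comm, pow_zero, mul_one]
  congr 1
  refine Finset.prod_congr rfl fun k _ => ?_
  ring

theorem qPoch_ne_zero {a Q : ℂ} (ha : ‖a‖ < 1) (hQ : ‖Q‖ ≤ 1) (n : ℕ) :
    qPoch a Q n ≠ 0 := by
  refine Finset.prod_ne_zero_iff.mpr fun k _ => sub_ne_zero.mpr fun h => ?_
  have : ‖a * Q ^ k‖ < 1 := by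
    rw [norm_mul, norm_pow]
    exact (mul_le_of_le_one_right (norm_nonneg _) (pow_le_one₀ (norm_nonneg _) hQ)).trans_lt ha
  simp [← h] at this

noncomputable def psi11Term (q a z : ℂ) (n : ℕ) : ℂ :=
  qPoch a (q ^ 2) n / qPoch (q ^ 2) (q ^ 2) n * (-1) ^ n * q ^ (n * (n - 1)) * z ^ n

theorem psi11_eq_tsum (q a z : ℂ) : psi11 q a z = ∑' n, psi11Term q a z n := rfl

theorem psi11Term_succ {q : ℂ} (a z : ℂ) {n : ℕ} (hn : qPoch (q ^ 2) (q ^ 2) (n + 1) ≠ 0) :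
    psi11Term q a z (n + 1) =
      psi11Term q a z n *
        -((1 - a * (q ^ 2) ^ n) * (q ^ 2) ^ n * z / (1 - q ^ 2 * (q ^ 2) ^ n)) := by
  rw [qPoch_succ] at hn
  have hD := left_ne_zero_of_mul hn
  have hfac := right_ne_zero_of_mul hn
  have hexp : (n + 1) * (n + 1 - 1) = n * (n - 1) + 2 * n := by
    rw [Nat.add_sub_cancel]
    rcases n with _ | m
    · rfl
    · rw [Nat.add_sub_cancel]; ring
  simp only [psi11Term, qPoch_succ, hexp, pow_add, pow_mul]
  field_simp

theorem summable_psi11Term {q : ℂ} (hq : ‖q‖ < 1) (a z : ℂ) :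
    Summable (psi11Term q a z) := by
  have hQ : ‖q ^ 2‖ < 1 := by rw [norm_pow]; exact pow_lt_one₀ (norm_nonneg q) hq two_ne_zero
  have hQn : Tendsto (fun n : ℕ => (q ^ 2) ^ n) atTop (𝓝 0) :=
    tendsto_pow_atTop_nhds_zero_of_norm_lt_one hQ
  refine summable_of_succ_eq_mul_of_tendsto_zero
    (fun n => psi11Term_succ a z (qPoch_ne_zero hQ hQ.le (n + 1))) ?_
  have hnum :=
    (((tendsto_const_nhds (x := (1 : ℂ))).sub (hQn.const_mul a)).mul hQn).mul_const z
  have hden := (tendsto_const_nhds (x := (1 : ℂ))).sub (hQn.const_mul (q ^ 2))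
  simpa using (hnum.div hden (by simp)).neg

theorem psi11Term_contiguity (q a z : ℂ) (n : ℕ) :
    psi11Term q a z n - a * psi11Term q a (q ^ 2 * z) n =
      (1 - a) * psi11Term q (q ^ 2 * a) z n := by
  have key : qPoch a (q ^ 2) n * (1 - a * (q ^ 2) ^ n) =
      (1 - a) * qPoch (q ^ 2 * a) (q ^ 2) n := by
    rw [← qPoch_succ, qPoch_succ']
  simp only [psi11Term, div_eq_mul_inv, mul_pow]
  linear_combination ((qPoch (q ^ 2) (q ^ 2) n)⁻¹ * (-1) ^ n * q ^ (n * (n - 1)) * z ^ n) * key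

/-- Contiguity relation Ψ(a,z) − aΨ(a,q²z) = (1−a)Ψ(q²a,z). -/
theorem psi11_contiguity₁ (q a z : ℂ) (hq : ‖q‖ < 1) :
    psi11 q a z - a * psi11 q a (q ^ 2 * z) = (1 - a) * psi11 q (q ^ 2 * a) z := by
  simp only [psi11_eq_tsum]
  rw [← tsum_mul_left, ← tsum_mul_left,
    ← (summable_psi11Term hq a z).tsum_sub ((summable_psi11Term hq a (q ^ 2 * z)).mul_left a)]
  exact tsum_congr (psi11Term_contiguity q a z)
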